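/- If a category D has the amalgamation property (every span admits a cocone) and has no maximal objects (for every object X there is a non-isomorphism X → Y), then any two objects of D lying in the same connected component of D admit a cocone (joint embedding within each connected component). -/

import Mathlib

/-!
An object amalgamating a span `B ← A → C` receives maps from both `B` and `C`, so amalgamation
makes "admitting a common target" transitive. Being also reflexive and symmetric and containing
every morphism, this relation contains the zigzag relation generated by the morphisms.
-/

open CategoryTheory

namespace CategoryTheory

variable {D : Type u} [Category.{v} D]

def HasCommonTarget (B C : D) : Prop := ∃ (E : D) (_ : B ⟶ E) (_ : C ⟶ E), True

namespace HasCommonTarget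

theorem refl (X : D) : HasCommonTarget X X := ⟨X, 𝟙 X, 𝟙 X, trivial⟩

theorem symm {X Y : D} : HasCommonTarget X Y → HasCommonTarget Y X
  | ⟨E, f, g, _⟩ => ⟨E, g, f, trivial⟩

theorem of_hom {X Y : D} (f : X ⟶ Y) : HasCommonTarget X Y := ⟨Y, f, 𝟙 Y, trivial⟩

theorem of_zag {X Y : D} : Zag X Y → HasCommonTarget X Y
  | Or.inl ⟨f⟩ => of_hom f
  | Or.inr ⟨f⟩ => (of_hom f).symm

variable (AP : ∀ (A B C : D), (A ⟶ B) → (A ⟶ C) → HasCommonTarget B C)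
include AP

theorem trans {X Y Z : D} : HasCommonTarget X Y → HasCommonTarget Y Z → HasCommonTarget X Z
  | ⟨E₁, f₁, g₁, _⟩, ⟨E₂, f₂, g₂, _⟩ =>
    let ⟨E, h₁, h₂, _⟩ := AP Y E₁ E₂ g₁ f₂
    ⟨E, f₁ ≫ h₁, g₂ ≫ h₂, trivial⟩

theorem of_zigzag {X Y : D} (h : Zigzag X Y) : HasCommonTarget X Y := by
  induction h with
  | refl => exact refl X
  | tail _ hzag ih => exact trans AP ih (of_zag hzag)

end HasCommonTarget

end CategoryTheory

theorem stmt_4_general {D : Type u} [Category.{v} D]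
    (AP : ∀ (A B C : D), (A ⟶ B) → (A ⟶ C) → ∃ (E : D) (_ : B ⟶ E) (_ : C ⟶ E), True)
    (X Y : D) (h : Zigzag X Y) :
    ∃ (Z : D) (_ : X ⟶ Z) (_ : Y ⟶ Z), True :=
  HasCommonTarget.of_zigzag AP h

/-- If a category `D` has the amalgamation property (every span
`B ← A → C` admits an object receiving morphisms from `B` and `C`) and has no
maximal objects (every object admits a non-isomorphism out of it), then any two
objects in the same connected component (i.e. related by a zigzag of morphisms)
admit a cocone: there is a common object receiving morphisms from both. -/
theorem stmt_4 {D : Type u} [Category.{v} D]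
    (AP : ∀ (A B C : D), (A ⟶ B) → (A ⟶ C) → ∃ (E : D) (_ : B ⟶ E) (_ : C ⟶ E), True)
    (noMax : ∀ X : D, ∃ (Y : D) (f : X ⟶ Y), ¬IsIso f)
    (X Y : D) (h : Zigzag X Y) :
    ∃ (Z : D) (_ : X ⟶ Z) (_ : Y ⟶ Z), True :=
  stmt_4_general AP X Y h
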